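/- Let n ∈ ℕ, κ, γ ∈ ℕⁿ with γ ≥ κ componentwise, and let s = Σ_{0≤α≤κ} λ_α x^α ∈ ℝ_κ[x₁,…,xₙ]. Consider the differential operator ∂_s = s(∂_{x₁},…,∂_{xₙ}) as a linear operator on ℝ_γ[x₁,…,xₙ]. Then its symbol satisfies Sym_{∂_s}(x,u) = Σ_{0≤β≤γ} binom(γ,β) ∂_s(x^β) u^{γ−β} = Σ_{0≤α≤κ} λ_α · (γ!/(γ−α)!) · ∏_{i=1}^{n} (xᵢ + uᵢ)^{γᵢ−αᵢ}. -/

import Mathlib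

open MvPolynomial Finset

/-- The composition of iterated partial derivatives `∂^β = ∏ i, ∂_{x i}^{β i}`. -/
noncomputable def pdMulti {σ : Type} [Fintype σ] [DecidableEq σ] (β : σ → ℕ) :
    Module.End ℝ (MvPolynomial σ ℝ) :=
  (Finset.univ.toList.map
    (fun i => ((pderiv i).toLinearMap : Module.End ℝ (MvPolynomial σ ℝ)) ^ β i)).prod


lemma coeffC {a b g : ℕ} (hab : a ≤ b) (hbg : b ≤ g) :
    g.choose b * b.descFactorial a = g.descFactorial a * (g - a).choose (b - a) := by
  have h1 : 0 < (b - a).factorial * (g - b).factorial :=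
    Nat.mul_pos (Nat.factorial_pos _) (Nat.factorial_pos _)
  apply Nat.eq_of_mul_eq_mul_right h1
  have hgb : g - b = (g - a) - (b - a) := by omega
  have hba : b - a ≤ g - a := by omega
  calc g.choose b * b.descFactorial a * ((b - a).factorial * (g - b).factorial)
      = g.choose b * ((b - a).factorial * b.descFactorial a) * (g - b).factorial := by ring
    _ = g.choose b * b.factorial * (g - b).factorial := by
        rw [Nat.factorial_mul_descFactorial hab]
    _ = g.factorial := Nat.choose_mul_factorial_mul_factorial hbg
    _ = ((g - a).factorial * g.descFactorial a) := by
        rw [Nat.factorial_mul_descFactorial (le_trans hab hbg)]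
    _ = ((g - a).choose (b - a) * (b - a).factorial * ((g - a) - (b - a)).factorial) * g.descFactorial a := by
        rw [Nat.choose_mul_factorial_mul_factorial hba]
    _ = g.descFactorial a * (g - a).choose (b - a) * ((b - a).factorial * (g - b).factorial) := by
        rw [hgb]; ring

lemma oneVar {R : Type*} [CommRing R] (x y : R) {a g : ℕ} (hag : a ≤ g) :
    ∑ b ∈ Finset.Iic g, (g.choose b * b.descFactorial a : ℕ) • (x ^ (b - a) * y ^ (g - b))
      = (g.descFactorial a : ℕ) • (x + y) ^ (g - a) := by
  have hIic : Finset.Iic g = Finset.range (g + 1) := by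
    ext b; simp [Nat.lt_succ_iff]
  rw [hIic, Finset.range_eq_Ico, ← Finset.sum_Ico_consecutive _ (Nat.zero_le a) (by omega : a ≤ g + 1)]
  have hz : ∑ b ∈ Finset.Ico 0 a, (g.choose b * b.descFactorial a : ℕ) • (x ^ (b - a) * y ^ (g - b)) = 0 := by
    apply Finset.sum_eq_zero
    intro b hb
    simp only [Finset.mem_Ico] at hb
    rw [Nat.descFactorial_eq_zero_iff_lt.2 hb.2, mul_zero, zero_smul]
  rw [hz, zero_add, Finset.sum_Ico_eq_sum_range]
  have hga : g + 1 - a = (g - a) + 1 := by omega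
  rw [hga, add_pow, Finset.smul_sum]
  apply Finset.sum_congr rfl
  intro d hd
  simp only [Finset.mem_range, Nat.lt_succ_iff] at hd
  have h1 : a + d - a = d := by omega
  have h2 : g - (a + d) = (g - a) - d := by omega
  rw [h1, h2, coeffC (Nat.le_add_right a d) (by omega), h1]
  ring

lemma pderiv_pow_monomial {σ : Type} [DecidableEq σ] (i : σ) (k : ℕ) (m : σ →₀ ℕ) (c : ℝ) :
    (((pderiv i).toLinearMap : Module.End ℝ (MvPolynomial σ ℝ)) ^ k) (monomial m c)
      = monomial (m - Finsupp.single i k) (c * ((m i).descFactorial k)) := by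
  induction k generalizing m c with
  | zero => simp
  | succ k ih =>
    rw [pow_succ, Module.End.mul_apply]
    show (((pderiv i).toLinearMap : Module.End ℝ (MvPolynomial σ ℝ)) ^ k) (pderiv i (monomial m c)) = _
    rw [pderiv_monomial, ih]
    have he : m - Finsupp.single i 1 - Finsupp.single i k = m - Finsupp.single i (k + 1) := by
      rw [tsub_tsub, ← Finsupp.single_add, add_comm]
    rw [he]
    simp only [Finsupp.tsub_apply, Finsupp.single_eq_same]
    congr 1
    rcases Nat.eq_zero_or_pos (m i) with h | h
    · simp [h]
    · obtain ⟨n, hn⟩ : ∃ n, m i = n + 1 := ⟨m i - 1, by omega⟩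
      rw [hn, Nat.add_sub_cancel, Nat.succ_descFactorial_succ]
      push_cast
      ring

lemma list_pd {σ : Type} [Fintype σ] [DecidableEq σ] (α : σ → ℕ) :
    ∀ (l : List σ), l.Nodup → ∀ (m : σ →₀ ℕ) (c : ℝ),
    ((l.map (fun i => ((pderiv i).toLinearMap : Module.End ℝ (MvPolynomial σ ℝ)) ^ α i)).prod)
        (monomial m c)
      = monomial (m - ∑ i ∈ l.toFinset, Finsupp.single i (α i))
          (c * ∏ i ∈ l.toFinset, ((m i).descFactorial (α i))) := by
  intro l
  induction l with
  | nil => intro _ m c; simp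
  | cons i l ih =>
    intro hnd m c
    have hil : i ∉ l := (List.nodup_cons.1 hnd).1
    have hilf : i ∉ l.toFinset := by simpa using hil
    rw [List.map_cons, List.prod_cons, Module.End.mul_apply, ih (List.nodup_cons.1 hnd).2,
      pderiv_pow_monomial]
    have hS : (∑ j ∈ l.toFinset, Finsupp.single j (α j)) i = 0 := by
      rw [Finset.sum_apply']
      exact Finset.sum_eq_zero fun j hj => Finsupp.single_eq_of_ne' (by rintro rfl; exact hilf hj)
    have happ : (m - ∑ j ∈ l.toFinset, Finsupp.single j (α j)) i = m i := by
      rw [Finsupp.tsub_apply, hS, Nat.sub_zero]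
    rw [happ, List.toFinset_cons, Finset.sum_insert hilf, Finset.prod_insert hilf]
    congr 1
    · rw [tsub_tsub, add_comm]
    · push_cast; ring

lemma pdMulti_monomial {σ : Type} [Fintype σ] [DecidableEq σ] (α : σ → ℕ) (m : σ →₀ ℕ) (c : ℝ) :
    pdMulti α (monomial m c)
      = monomial (m - ∑ i, Finsupp.single i (α i)) (c * ∏ i, ((m i).descFactorial (α i))) := by
  have h := list_pd α Finset.univ.toList (Finset.nodup_toList _) m c
  rwa [Finset.toList_toFinset] at h

lemma prod_X_pow_univ {σ : Type} [Fintype σ] [DecidableEq σ] (β : σ → ℕ) :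
    (∏ i, (X i : MvPolynomial σ ℝ) ^ β i)
      = monomial (∑ i, Finsupp.single i (β i)) 1 := by
  rw [monomial_sum_one]
  exact Finset.prod_congr rfl fun i _ => X_pow_eq_monomial

lemma sum_single_apply {σ : Type} [Fintype σ] [DecidableEq σ] (β : σ → ℕ) (i : σ) :
    (∑ j, Finsupp.single j (β j) : σ →₀ ℕ) i = β i := by
  rw [Finset.sum_apply']
  rw [Finset.sum_eq_single i (fun j _ hj => Finsupp.single_eq_of_ne' hj) (by simp)]
  exact Finsupp.single_eq_same

lemma pdMulti_prod_X_pow {σ : Type} [Fintype σ] [DecidableEq σ] (α β : σ → ℕ) :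
    pdMulti α (∏ i, (X i : MvPolynomial σ ℝ) ^ β i)
      = ((∏ i, ((β i).descFactorial (α i)) : ℕ) : ℝ) •
          ∏ i, (X i : MvPolynomial σ ℝ) ^ (β i - α i) := by
  rw [prod_X_pow_univ, pdMulti_monomial, prod_X_pow_univ]
  have he : (∑ i, Finsupp.single i (β i)) - (∑ i, Finsupp.single i (α i))
      = ∑ i, Finsupp.single i (β i - α i) := by
    ext j
    rw [Finsupp.tsub_apply, sum_single_apply, sum_single_apply, sum_single_apply]
  have hc : ∀ i, ((∑ j, Finsupp.single j (β j) : σ →₀ ℕ) i).descFactorial (α i)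
      = (β i).descFactorial (α i) := fun i => by rw [sum_single_apply]
  rw [he, smul_monomial, smul_eq_mul, mul_one]
  rw [one_mul]
  congr 2
  exact Finset.prod_congr rfl fun i _ => hc i

lemma my_prod_smul {ι α β : Type*} [CommMonoid β] [CommMonoid α] [MulAction α β]
    [IsScalarTower α β β] [SMulCommClass α β β] (s : Finset ι) (b : ι → α) (f : ι → β) :
    ∏ i ∈ s, b i • f i = (∏ i ∈ s, b i) • ∏ i ∈ s, f i := by
  induction s using Finset.cons_induction_on with
  | empty => simp
  | cons _ _ hj ih => rw [Finset.prod_cons, Finset.prod_cons, Finset.prod_cons, ih, smul_mul_smul_comm]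


/-- Let `κ ≤ γ` componentwise and `s = Σ_{0≤α≤κ} λ_α x^α ∈ ℝ_κ[x₁,…,xₙ]`.  The symbol of the
differential operator `∂_s = s(∂_{x₁},…,∂_{xₙ})` on `ℝ_γ[x₁,…,xₙ]` satisfies
`Sym_{∂_s}(x,u) = Σ_{0≤β≤γ} binom(γ,β) ∂_s(x^β) u^{γ−β}
  = Σ_{0≤α≤κ} λ_α ⬝ (γ!/(γ−α)!) ⬝ ∏ᵢ (xᵢ+uᵢ)^{γᵢ−αᵢ}`
(the `x`-variables are `Sum.inl`, the `u`-variables `Sum.inr`; `γ!/(γ−α)!` is the falling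
factorial `∏ᵢ (γᵢ)(γᵢ−1)⋯(γᵢ−αᵢ+1)`). -/
theorem symbol_of_diffOp (n : ℕ) (κ γ : Fin n → ℕ) (hκγ : κ ≤ γ)
    (lam : (Fin n → ℕ) → ℝ) :
    (∑ β ∈ Finset.Iic γ, (∏ i, ((γ i).choose (β i) : ℝ)) •
        (rename Sum.inl ((∑ α ∈ Finset.Iic κ, lam α • pdMulti α) (∏ i, X i ^ β i)) *
          ∏ i, (X (Sum.inr i) : MvPolynomial (Fin n ⊕ Fin n) ℝ) ^ (γ i - β i)))
      = ∑ α ∈ Finset.Iic κ, (lam α * ∏ i, ((γ i).descFactorial (α i) : ℝ)) •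
          ∏ i, (X (Sum.inl i) + X (Sum.inr i) : MvPolynomial (Fin n ⊕ Fin n) ℝ) ^ (γ i - α i) := by
  have hpi : (Finset.Iic γ : Finset (Fin n → ℕ)) = Fintype.piFinset fun i => Finset.Iic (γ i) := by
    ext β; simp [Fintype.mem_piFinset, Pi.le_def]
  simp only [LinearMap.sum_apply, LinearMap.smul_apply, pdMulti_prod_X_pow, map_sum, map_smul,
    map_prod, map_pow, rename_X, Finset.sum_mul, smul_mul_assoc, Finset.smul_sum]
  rw [Finset.sum_comm]
  apply Finset.sum_congr rfl
  intro α hα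
  have hακ : α ≤ κ := Finset.mem_Iic.1 hα
  set Xl : Fin n → MvPolynomial (Fin n ⊕ Fin n) ℝ := fun i => X (Sum.inl i) with hXl
  set Xr : Fin n → MvPolynomial (Fin n ⊕ Fin n) ℝ := fun i => X (Sum.inr i) with hXr
  have key : ∑ β ∈ Finset.Iic γ,
      (∏ i, ((γ i).choose (β i) * (β i).descFactorial (α i))) •
        (∏ i, (Xl i ^ (β i - α i) * Xr i ^ (γ i - β i)))
      = (∏ i, (γ i).descFactorial (α i)) • ∏ i, (Xl i + Xr i) ^ (γ i - α i) := by
    calc ∑ β ∈ Finset.Iic γ,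
        (∏ i, ((γ i).choose (β i) * (β i).descFactorial (α i))) •
          (∏ i, (Xl i ^ (β i - α i) * Xr i ^ (γ i - β i)))
        = ∑ β ∈ Fintype.piFinset (fun i => Finset.Iic (γ i)), ∏ i,
            (((γ i).choose (β i) * (β i).descFactorial (α i)) •
              (Xl i ^ (β i - α i) * Xr i ^ (γ i - β i))) := by
          rw [← hpi]
          exact Finset.sum_congr rfl fun β _ =>
            (my_prod_smul Finset.univ
              (fun i => (γ i).choose (β i) * (β i).descFactorial (α i))
              (fun i => Xl i ^ (β i - α i) * Xr i ^ (γ i - β i))).symm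
      _ = ∏ i, ∑ b ∈ Finset.Iic (γ i),
            (((γ i).choose b * b.descFactorial (α i)) •
              (Xl i ^ (b - α i) * Xr i ^ (γ i - b))) :=
          (Finset.prod_univ_sum (fun i => Finset.Iic (γ i))
            (fun i b => ((γ i).choose b * b.descFactorial (α i)) •
              (Xl i ^ (b - α i) * Xr i ^ (γ i - b)))).symm
      _ = ∏ i, ((γ i).descFactorial (α i)) • (Xl i + Xr i) ^ (γ i - α i) :=
          Finset.prod_congr rfl fun i _ => oneVar _ _ (le_trans (hακ i) (hκγ i))
      _ = (∏ i, (γ i).descFactorial (α i)) • ∏ i, (Xl i + Xr i) ^ (γ i - α i) :=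
          my_prod_smul Finset.univ _ _
  calc ∑ β ∈ Finset.Iic γ, (∏ i, ((γ i).choose (β i) : ℝ)) •
        lam α • (((∏ i, (β i).descFactorial (α i) : ℕ) : ℝ) •
          ((∏ i, Xl i ^ (β i - α i)) * ∏ i, Xr i ^ (γ i - β i)))
      = lam α • ∑ β ∈ Finset.Iic γ,
          (∏ i, ((γ i).choose (β i) * (β i).descFactorial (α i))) •
            ∏ i, Xl i ^ (β i - α i) * Xr i ^ (γ i - β i) := by
        rw [Finset.smul_sum]
        refine Finset.sum_congr rfl fun β _ => ?_
        rw [← Nat.cast_smul_eq_nsmul ℝ, ← Finset.prod_mul_distrib]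
        simp only [smul_smul]
        congr 1
        push_cast
        rw [Finset.prod_mul_distrib]
        ring
    _ = lam α • ((∏ i, (γ i).descFactorial (α i)) • ∏ i, (Xl i + Xr i) ^ (γ i - α i)) := by
        rw [key]
    _ = (lam α * ∏ i, ((γ i).descFactorial (α i) : ℝ)) • ∏ i, (Xl i + Xr i) ^ (γ i - α i) := by
        rw [← Nat.cast_smul_eq_nsmul ℝ, smul_smul]
        congr 1
        push_cast
        ring
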